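/- arXiv:math/0702579 — 3 statements merged into one kernel-verified Lean document; each statement's English description precedes it below -/
import Mathlib

section
/- The map τ fixes the class of 0 in ℂ/Λ, and there is no bijection h : ℂ/Λ → ℂ/Λ satisfying h ∘ σ = τ ∘ h. (In the paper this shows that the genus-one real curve (ℂ/Λ, σ), which has no real points, is not isomorphic to its Jacobian Pic⁰, whose real structure is induced by τ and which has the real point 0; hence the Torelli theorem fails for real curves of genus one.) -/
/-!
If `h` conjugated `σ` to `τ`, it would carry fixed points of `τ` back to fixed points of `σ`.
But `τ` fixes `0`, while `σ` has no fixed point at all: `conj z + 1/2 ≡ z` modulo `Λ` would put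
an element of real part `1/2` into `Λ`, whose elements all have integer real part.
-/

open Function Complex

theorem Function.Semiconj.isFixedPt_of_map {α β : Type*} {fa : α → α} {fb : β → β} {g : α → β}
    (h : Semiconj g fa fb) (hg : Injective g) {x : α} (hx : IsFixedPt fb (g x)) :
    IsFixedPt fa x :=
  hg <| (h.eq x).trans hx

def Complex.intReSubgroup : AddSubgroup ℂ :=
  (Int.castAddHom ℝ).range.comap reAddGroupHom

theorem Complex.mem_intReSubgroup {z : ℂ} : z ∈ intReSubgroup ↔ ∃ m : ℤ, (m : ℝ) = z.re :=
  Iff.rfl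

theorem Complex.closure_one_ofReal_mul_I_le_intReSubgroup (a : ℝ) :
    AddSubgroup.closure {1, (a : ℂ) * I} ≤ intReSubgroup := by
  rw [AddSubgroup.closure_le]
  rintro z (rfl | rfl)
  · exact mem_intReSubgroup.2 ⟨1, by simp⟩
  · exact mem_intReSubgroup.2 ⟨0, by simp⟩

theorem Complex.half_add_conj_sub_self_notMem_intReSubgroup (z : ℂ) :
    1 / 2 + (starRingEnd ℂ z - z) ∉ intReSubgroup := by
  rintro ⟨m, hm⟩
  have hm : (m : ℝ) = 1 / 2 := by simpa using hm
  have h2m : ((2 * m : ℤ) : ℝ) = ((1 : ℤ) : ℝ) := by push_cast; linarith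
  have := Int.cast_injective h2m
  omega

theorem not_isFixedPt_conj_add_half {Λ : AddSubgroup ℂ} (hΛ : Λ ≤ intReSubgroup)
    {σ : ℂ ⧸ Λ → ℂ ⧸ Λ} (hσ : ∀ z : ℂ, σ z = ((starRingEnd ℂ z + 1 / 2 : ℂ) : ℂ ⧸ Λ))
    (y : ℂ ⧸ Λ) : ¬ IsFixedPt σ y := by
  induction y using QuotientAddGroup.induction_on with | H z => ?_
  intro hz
  rw [IsFixedPt, hσ, QuotientAddGroup.eq] at hz
  refine half_add_conj_sub_self_notMem_intReSubgroup z (hΛ ?_)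
  convert Λ.neg_mem hz using 1
  ring

theorem real_torelli_fails_genus_one_general (a : ℝ)
    (Λ : AddSubgroup ℂ) (hΛ : Λ = AddSubgroup.closure {1, (a : ℂ) * Complex.I})
    (f : ℂ → ℂ) (hf : ∀ z : ℂ, f z = (starRingEnd ℂ) z + 1 / 2)
    (σ : ℂ ⧸ Λ → ℂ ⧸ Λ)
    (hσ : ∀ z : ℂ, σ (QuotientAddGroup.mk z) = QuotientAddGroup.mk (f z))
    (τ : ℂ ⧸ Λ → ℂ ⧸ Λ)
    (hτ : ∀ z : ℂ, τ (QuotientAddGroup.mk z) = QuotientAddGroup.mk ((starRingEnd ℂ) z)) :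
    τ 0 = 0 ∧ ¬ ∃ h : ℂ ⧸ Λ → ℂ ⧸ Λ, Function.Bijective h ∧ h ∘ σ = τ ∘ h := by
  have hτ0 : τ 0 = 0 := by simpa using hτ 0
  refine ⟨hτ0, ?_⟩
  rintro ⟨h, ⟨hinj, hsurj⟩, hcomm⟩
  obtain ⟨y, hy⟩ := hsurj 0
  have hσy : IsFixedPt σ y :=
    (semiconj_iff_comp_eq.2 hcomm).isFixedPt_of_map hinj (by rw [hy]; exact hτ0)
  refine not_isFixedPt_conj_add_half ?_ (fun z => (hσ z).trans (congrArg _ (hf z))) y hσy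
  exact hΛ ▸ closure_one_ofReal_mul_I_le_intReSubgroup a

/-- Fix a real `a > 0`, let `Λ ⊆ ℂ` be the additive subgroup generated by `1` and `a·i`.
The map `f z = conj z + 1/2` descends to `σ : ℂ/Λ → ℂ/Λ`, and complex conjugation
descends to `τ : ℂ/Λ → ℂ/Λ`.  Then `τ` fixes the class of `0`, and there is no bijection
`h : ℂ/Λ → ℂ/Λ` with `h ∘ σ = τ ∘ h`.  (Hence the genus-one real curve `(ℂ/Λ, σ)`, which
has no real points, is not isomorphic to its Jacobian, whose real structure is induced by
`τ` and which has the real point `0`; the Torelli theorem fails for real genus-one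
curves.) -/
theorem real_torelli_fails_genus_one (a : ℝ) (ha : 0 < a)
    (Λ : AddSubgroup ℂ) (hΛ : Λ = AddSubgroup.closure {1, (a : ℂ) * Complex.I})
    (f : ℂ → ℂ) (hf : ∀ z : ℂ, f z = (starRingEnd ℂ) z + 1 / 2)
    (σ : ℂ ⧸ Λ → ℂ ⧸ Λ)
    (hσ : ∀ z : ℂ, σ (QuotientAddGroup.mk z) = QuotientAddGroup.mk (f z))
    (τ : ℂ ⧸ Λ → ℂ ⧸ Λ)
    (hτ : ∀ z : ℂ, τ (QuotientAddGroup.mk z) = QuotientAddGroup.mk ((starRingEnd ℂ) z)) :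
    τ 0 = 0 ∧ ¬ ∃ h : ℂ ⧸ Λ → ℂ ⧸ Λ, Function.Bijective h ∧ h ∘ σ = τ ∘ h :=
  real_torelli_fails_genus_one_general a Λ hΛ f hf σ hσ τ hτ
end

section
/- For every ε > 0 there exists a continuous map R : X × [0,1] → X such that: R(x, 1) = x for all x ∈ X; R(x, s) = x for all x ∈ U_ε and all s ∈ [0,1]; and R(x, 0) ∈ U_ε for all x ∈ X, where U_ε = { x ∈ X : B(H(x)) ≤ ε }. In other words, X deformation retracts onto the compact neighborhood U_ε of H⁻¹(0). -/
/-- Fix `r ≥ 2` and finite-dimensional complex normed spaces `V i` for `2 ≤ i ≤ r`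
(indexed here by `i : Fin (r-1)`, the `i`-th space having weight `i + 2`), and let
`B (ω) = ∑_{i=2}^r ‖ω_i‖^(1/i)`.  Let `X` carry a jointly continuous action of the
multiplicative monoid `ℝ≥0`, and let `H : X → V` be a continuous proper map which is
equivariant for the weighted scaling action (`t` acts on the `i`-th component by `t^i`).
Then for every `ε > 0` the space `X` deformation retracts onto the compact neighborhood
`U_ε = { x : B (H x) ≤ ε }` of the nilpotent cone `H⁻¹(0)`: there is a continuous
`R : X × [0,1] → X` with `R (x,1) = x` for all `x`, `R (x,s) = x` for all `x ∈ U_ε` and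
all `s`, and `R (x,0) ∈ U_ε` for all `x`. -/
theorem hitchin_retraction_onto_neighborhood_of_nilpotent_cone (r : ℕ) (hr : 2 ≤ r)
    (V : Fin (r - 1) → Type*)
    [∀ i, NormedAddCommGroup (V i)] [∀ i, NormedSpace ℂ (V i)]
    [∀ i, FiniteDimensional ℂ (V i)]
    (B : (∀ i, V i) → ℝ)
    (hB : ∀ ω : ∀ i, V i, B ω = ∑ i, ‖ω i‖ ^ (1 / ((i.val : ℝ) + 2)))
    (X : Type*) [TopologicalSpace X]
    (act : NNReal → X → X)
    (hact_cont : Continuous fun p : NNReal × X => act p.1 p.2)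
    (hact_one : ∀ x : X, act 1 x = x)
    (hact_mul : ∀ s t : NNReal, ∀ x : X, act (s * t) x = act s (act t x))
    (H : X → ∀ i, V i) (hHcont : Continuous H)
    (hHproper : ∀ K : Set (∀ i, V i), IsCompact K → IsCompact (H ⁻¹' K))
    (hHequiv : ∀ (t : NNReal) (x : X) (i : Fin (r - 1)),
      H (act t x) i = (((t : ℝ) : ℂ) ^ (i.val + 2)) • H x i) :
    ∀ ε : ℝ, 0 < ε → ∃ R : X × unitInterval → X,
      Continuous R ∧
      (∀ x : X, R (x, 1) = x) ∧
      (∀ x ∈ {x : X | B (H x) ≤ ε}, ∀ s : unitInterval, R (x, s) = x) ∧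
      (∀ x : X, R (x, 0) ∈ {x : X | B (H x) ≤ ε}) := by
  intro ε hε
  -- the scaling property of φ = B ∘ H
  have hscale : ∀ (t : NNReal) (x : X), B (H (act t x)) = (t : ℝ) * B (H x) := by
    intro t x
    rw [hB, hB, Finset.mul_sum]
    refine Finset.sum_congr rfl fun i _ => ?_
    have hne : ((i.val : ℝ) + 2) ≠ 0 := by positivity
    have h1 : ‖H (act t x) i‖ = (t : ℝ) ^ (i.val + 2) * ‖H x i‖ := by
      rw [hHequiv, norm_smul, norm_pow]
      simp [Real.norm_of_nonneg t.2]
    rw [h1, Real.mul_rpow (by positivity) (norm_nonneg _)]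
    congr 1
    rw [← Real.rpow_natCast (t : ℝ) (i.val + 2), ← Real.rpow_mul (by positivity : (0:ℝ) ≤ (t:ℝ))]
    have : ((i.val + 2 : ℕ) : ℝ) * (1 / ((i.val : ℝ) + 2)) = 1 := by
      push_cast
      rw [mul_one_div, div_self hne]
    rw [this, Real.rpow_one]
  set φ : X → ℝ := fun x => B (H x) with hφ
  have hφcont : Continuous φ := by
    have : φ = fun x => ∑ i, ‖H x i‖ ^ (1 / ((i.val : ℝ) + 2)) := by
      funext x; exact hB (H x)
    rw [this]
    refine continuous_finset_sum _ fun i _ => ?_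
    refine Continuous.rpow_const ?_ fun x => Or.inr (by positivity)
    exact continuous_norm.comp ((continuous_apply i).comp hHcont)
  set m : X → ℝ := fun x => max ε (φ x) with hm
  have hm_pos : ∀ x, 0 < m x := fun x => lt_of_lt_of_le hε (le_max_left _ _)
  have hmcont : Continuous m := continuous_const.max hφcont
  set τ : X × unitInterval → ℝ :=
    fun p => min 1 ((p.2 : ℝ) + (1 - (p.2 : ℝ)) * ε / m p.1) with hτ
  have hτcont : Continuous τ := by
    refine continuous_const.min ?_
    have hs : Continuous fun p : X × unitInterval => (p.2 : ℝ) :=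
      continuous_subtype_val.comp continuous_snd
    exact hs.add (((continuous_const.sub hs).mul continuous_const).div
      (hmcont.comp continuous_fst) fun p => (hm_pos p.1).ne')
  refine ⟨fun p => act (Real.toNNReal (τ p)) p.1, ?_, ?_, ?_, ?_⟩
  · exact hact_cont.comp
      ((continuous_real_toNNReal.comp hτcont).prodMk continuous_fst)
  · intro x
    have : τ (x, 1) = 1 := by
      simp [hτ]
    show act (Real.toNNReal (τ (x, 1))) x = x
    rw [this]
    simpa using hact_one x
  · intro x hx s
    have hmx : m x = ε := max_eq_left hx
    have : τ (x, s) = 1 := by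
      simp only [hτ, hmx]
      rw [mul_div_assoc, div_self hε.ne']
      simp
    show act (Real.toNNReal (τ (x, s))) x = x
    rw [this]
    simpa using hact_one x
  · intro x
    have hle : ε / m x ≤ 1 := (div_le_one (hm_pos x)).2 (le_max_left _ _)
    have hτ0 : τ (x, 0) = ε / m x := by
      simp [hτ, hle]
    have hnn : (0 : ℝ) ≤ ε / m x := div_nonneg hε.le (hm_pos x).le
    have hcoe : ((Real.toNNReal (τ (x, 0))) : ℝ) = ε / m x := by
      rw [hτ0, Real.coe_toNNReal _ hnn]
    show B (H (act (Real.toNNReal (τ (x, 0))) x)) ≤ ε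
    rw [hscale, hcoe]
    calc (ε / m x) * φ x ≤ (ε / m x) * m x :=
          mul_le_mul_of_nonneg_left (le_max_right _ _) hnn
      _ = ε := div_mul_cancel₀ ε (hm_pos x).ne'
end

section
/- One has (g − 1)·(∑_{i=1}^ℓ r_i² + ∑_{1 ≤ k < i ≤ ℓ} r_i r_k) − g ≤ (r² − r)(g − 1). (This is the dimension count showing that the space of strictly semistable vector bundles with graduation type (r₁, …, r_ℓ) has dimension at most (r² − r)(g − 1): the space of graduations contributes ℓ − g + ∑ r_i²(g − 1) and the extension data contribute at most −ℓ + (g − 1) ∑_{k < i} r_i r_k, and the total is maximized at ℓ = 2, {r₁, r₂} = {1, r − 1}.) -/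
/-!
Write `S = ∑ rᵢ²` and `T = ∑_{k<i} rᵢ rₖ`. Expanding `r² = (∑ rᵢ)²` gives `S + 2T = r²`, so the
claim reads `(g - 1)(r - T) ≤ g`. Splitting off `r₁`, `T ≥ r₁ (r - r₁) ≥ r - 1` because
`(r₁ - 1)(r - r₁ - 1) ≥ 0` once there are at least two positive parts.
-/

open Finset

theorem sq_sum_eq_sum_sq_add_two_mul_sum_sum_Iio {ι R : Type*} [LinearOrder ι] [Fintype ι]
    [LocallyFiniteOrderBot ι] [LocallyFiniteOrderTop ι] [CommSemiring R] (x : ι → R) :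
    (∑ i, x i) ^ 2 = ∑ i, x i ^ 2 + 2 * ∑ i, ∑ k ∈ Iio i, x i * x k := by
  have hIoi : ∑ i, ∑ k ∈ Ioi i, x i * x k = ∑ i, ∑ k ∈ Iio i, x i * x k := by
    rw [sum_comm' (t' := univ) (s' := Iio) (fun i k => by simp)]
    simp_rw [mul_comm]
  have hsplit : ∀ i, ∑ k, x i * x k =
      x i ^ 2 + (∑ k ∈ Ioi i, x i * x k + ∑ k ∈ Iio i, x i * x k) := by
    intro i
    rw [← add_sum_erase _ _ (mem_univ i), ← compl_singleton, ← Ioi_disjUnion_Iio,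
      sum_disjUnion, sq]
  rw [sq, sum_mul_sum, Fintype.sum_congr _ _ hsplit, sum_add_distrib, sum_add_distrib, hIoi,
    two_mul]

theorem Fin.mul_sum_succ_le_sum_sum_Iio {n : ℕ} {R : Type*} [CommSemiring R] [PartialOrder R]
    [IsOrderedRing R] (x : Fin (n + 1) → R) (hx : ∀ i, 0 ≤ x i) :
    x 0 * ∑ i : Fin n, x i.succ ≤ ∑ i, ∑ k ∈ Iio i, x i * x k := by
  rw [Fin.sum_univ_succ, mul_sum]
  refine le_add_of_nonneg_of_le (sum_nonneg fun k _ => mul_nonneg (hx 0) (hx k)) ?_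
  refine sum_le_sum fun i _ => ?_
  rw [mul_comm]
  exact single_le_sum (f := fun k => x i.succ * x k) (fun k _ => mul_nonneg (hx _) (hx k))
    (mem_Iio.2 i.succ_pos)

theorem Fin.sum_sub_one_le_sum_sum_Iio {n : ℕ} (x : Fin (n + 2) → ℤ) (hx : ∀ i, 1 ≤ x i) :
    ∑ i, x i - 1 ≤ ∑ i, ∑ k ∈ Iio i, x i * x k := by
  have hx_nonneg i : 0 ≤ x i := zero_le_one.trans (hx i)
  have hrest : 1 ≤ ∑ i : Fin (n + 1), x i.succ := by
    have htail : 0 ≤ ∑ i : Fin n, x i.succ.succ := sum_nonneg fun i _ => hx_nonneg _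
    rw [Fin.sum_univ_succ]
    linarith [hx (Fin.succ 0)]
  have hprod := Fin.mul_sum_succ_le_sum_sum_Iio x hx_nonneg
  rw [Fin.sum_univ_succ]
  nlinarith [mul_nonneg (sub_nonneg.2 (hx 0)) (sub_nonneg.2 hrest)]

theorem strictly_semistable_dimension_bound_general (g r : ℤ)
    (hg : 3 ≤ g)
    (l : ℕ) (hl : 2 ≤ l)
    (rk : Fin l → ℤ) (hpos : ∀ i, 1 ≤ rk i) (hsum : ∑ i, rk i = r) :
    (g - 1) * ((∑ i, (rk i) ^ 2) + ∑ i, ∑ k ∈ Finset.Iio i, rk i * rk k) - g ≤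
      (r ^ 2 - r) * (g - 1) := by
  obtain ⟨n, rfl⟩ : ∃ n, l = n + 2 := ⟨l - 2, by omega⟩
  have hsq := sq_sum_eq_sum_sq_add_two_mul_sum_sum_Iio rk
  have hcross := Fin.sum_sub_one_le_sum_sum_Iio rk hpos
  rw [hsum] at hsq hcross
  nlinarith [mul_le_mul_of_nonneg_left hcross (by linarith : (0 : ℤ) ≤ g - 1)]

/-- Let `g ≥ 3` and `r ≥ 2`, with `r ≥ 3` if `g = 3`.  Let `ℓ ≥ 2` and let
`r₁, …, r_ℓ` be positive integers with `∑ rᵢ = r`.  Then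
`(g - 1)·(∑ rᵢ² + ∑_{k<i} rᵢ rₖ) - g ≤ (r² - r)(g - 1)`.
(Dimension count showing that the space of strictly semistable bundles with graduation
type `(r₁, …, r_ℓ)` has dimension at most `(r² - r)(g - 1)`.) -/
theorem strictly_semistable_dimension_bound (g r : ℤ)
    (hg : 3 ≤ g) (hr : 2 ≤ r) (h3 : g = 3 → 3 ≤ r)
    (l : ℕ) (hl : 2 ≤ l)
    (rk : Fin l → ℤ) (hpos : ∀ i, 1 ≤ rk i) (hsum : ∑ i, rk i = r) :
    (g - 1) * ((∑ i, (rk i) ^ 2) + ∑ i, ∑ k ∈ Finset.Iio i, rk i * rk k) - g ≤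
      (r ^ 2 - r) * (g - 1) :=
  strictly_semistable_dimension_bound_general g r hg l hl rk hpos hsum
end
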